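/- arXiv:2307.01092 — 2 statements merged into one kernel-verified Lean document; each statement's English description precedes it below -/
import Mathlib

section
/- Let δ ∈ [0.167, 0.169] be a real root of f_δ, and let q = (q₁, q₂) ∈ ℝ² satisfy dist(q, (0,1)) = 1/2, q₂ < 1, q₁ ∈ [0.38, 0.39], and f_{q^x}(q₁) = 0. Then the polygonal path with consecutive vertices p_s = (1/2, 0), p_δ = (1/2, δ), q, p_t = (1, 1/2 + δ) covers the unit square S₀ = [0,1]² with radius 1/2, i.e., every point of S₀ is within distance 1/2 of the union of the three segments [p_s,p_δ] ∪ [p_δ,q] ∪ [q,p_t]. -/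
open Set

/-- The Euclidean plane. -/
abbrev E2 := EuclideanSpace ℝ (Fin 2)

/-- The point (x, y) in the Euclidean plane. -/
noncomputable def pt (x y : ℝ) : E2 := !₂[x, y]

/-- The axis-aligned rectangle [a,b] × [c,d]. -/
def rect (a b c d : ℝ) : Set E2 := {p | p 0 ∈ Icc a b ∧ p 1 ∈ Icc c d}

open Polynomial in
/-- The degree-16 integer polynomial `f_δ` whose root in [0.167, 0.169] is the
optimal value of δ. -/
noncomputable def fdelta : Polynomial ℤ :=
  589824 * X ^ 16 - 7077888 * X ^ 15 + 41189376 * X ^ 14 - 154386432 * X ^ 13 +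
    416788480 * X ^ 12 - 857112576 * X ^ 11 + 1383417856 * X ^ 10 - 1779354624 * X ^ 9 +
    1834437632 * X ^ 8 - 1514108928 * X ^ 7 + 992782336 * X ^ 6 - 509312064 * X ^ 5 +
    199354208 * X ^ 4 - 57160752 * X ^ 3 + 11200088 * X ^ 2 - 1313928 * X + 67417

open Polynomial in
/-- The degree-16 integer polynomial `f_{q^x}` vanishing at the x-coordinate of the
optimal touching point `q`. -/
noncomputable def fqx : Polynomial ℤ :=
  16777216 * X ^ 16 - 29360128 * X ^ 14 + 21757952 * X ^ 12 - 8978432 * X ^ 10 +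
    196608 * X ^ 9 + 2187264 * X ^ 8 - 208896 * X ^ 7 - 233472 * X ^ 6 + 38400 * X ^ 5 -
    2432 * X ^ 4 + 2304 * X ^ 3 + 1008 * X ^ 2 - 648 * X + 81

/-!
The square is cut into horizontal bands. Below height `δ` the first segment is within horizontal
distance `1/2`. For `δ < y ≤ q₂` the middle segment is within horizontal distance `1/2`, except
to the right of its translate by `(1/2, 0)`; that corner lies in the triangle with vertices
`(1, δ)`, `q + (1/2, 0)`, `(1, q₂)`, whose vertices, hence all of it, are within `1/2` of `p_t`.
Above `q₂`, points with `x ≤ 2 q₁` are within `1/2` of `q`, since `q` lies on the circle of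
radius `1/2` about `(0, 1)`, and the others are within vertical distance `1/2` of the last segment.
-/

section Segment

variable {ι : Type*} {u v w : EuclideanSpace ℝ ι}

theorem EuclideanSpace.exists_mem_segment_apply_eq {i : ι} {y : ℝ} (hy : y ∈ uIcc (u i) (v i)) :
    ∃ w ∈ segment ℝ u v, w i = y := by
  rw [← segment_eq_uIcc] at hy
  simpa using (image_segment ℝ (PiLp.projₗ 2 (fun _ ↦ ℝ) i).toAffineMap u v).symm.subset hy

theorem EuclideanSpace.exists_apply_eq_of_mem_segment (hw : w ∈ segment ℝ u v) :
    ∃ θ ∈ Icc (0 : ℝ) 1, ∀ i, w i = u i + θ * (v i - u i) := by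
  obtain ⟨θ, hθ, rfl⟩ := (segment_eq_image' ℝ u v).subset hw
  exact ⟨θ, hθ, fun i ↦ rfl⟩

end Segment

@[simp] theorem pt_apply_zero (x y : ℝ) : pt x y 0 = x := rfl
@[simp] theorem pt_apply_one (x y : ℝ) : pt x y 1 = y := rfl

theorem E2.dist_sq_eq (p w : E2) : dist p w ^ 2 = (p 0 - w 0) ^ 2 + (p 1 - w 1) ^ 2 := by
  simp [EuclideanSpace.dist_sq_eq, Fin.sum_univ_two, Real.dist_eq, sq_abs]

theorem E2.dist_eq_abs_of_apply_one_eq {p w : E2} (h : p 1 = w 1) : dist p w = |p 0 - w 0| := by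
  rw [← Real.sqrt_sq dist_nonneg, E2.dist_sq_eq, h, sub_self, zero_pow two_ne_zero, add_zero,
    Real.sqrt_sq_eq_abs]

theorem E2.dist_eq_abs_of_apply_zero_eq {p w : E2} (h : p 0 = w 0) : dist p w = |p 1 - w 1| := by
  rw [← Real.sqrt_sq dist_nonneg, E2.dist_sq_eq, h, sub_self, zero_pow two_ne_zero, zero_add,
    Real.sqrt_sq_eq_abs]

section OptimalPath

variable {δ : ℝ} {q p : E2}

theorem exists_mem_first_segment_dist_le (hx : p 0 ∈ Icc 0 1) (hy : p 1 ∈ Icc 0 δ) :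
    ∃ w ∈ segment ℝ (pt (1 / 2) 0) (pt (1 / 2) δ), dist p w ≤ 1 / 2 := by
  obtain ⟨w, hw, hwy⟩ := EuclideanSpace.exists_mem_segment_apply_eq (i := 1)
    (u := pt (1 / 2) 0) (v := pt (1 / 2) δ) (mem_uIcc.2 (.inl hy))
  obtain ⟨θ, -, hθ⟩ := EuclideanSpace.exists_apply_eq_of_mem_segment hw
  refine ⟨w, hw, ?_⟩
  rw [E2.dist_eq_abs_of_apply_one_eq hwy.symm, hθ, abs_le]
  simp only [pt_apply_zero]
  constructor <;> linarith [hx.1, hx.2]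

-- `hcorner` says that `q + (1/2, 0)` lies within `1/2` of `p_t = (1, 1/2 + δ)`.
theorem exists_mem_middle_or_last_segment_dist_le (hx : p 0 ∈ Icc 0 1)
    (hy : p 1 ∈ Ioc δ (q 1)) (hq0 : q 0 ≤ 1 / 2)
    (hcorner : (1 / 2 - q 0) ^ 2 ≤ (q 1 - δ) * (1 - (q 1 - δ))) :
    ∃ w ∈ segment ℝ (pt (1 / 2) δ) q ∪ segment ℝ q (pt 1 (1 / 2 + δ)), dist p w ≤ 1 / 2 := by
  obtain ⟨w, hw, hwy⟩ := EuclideanSpace.exists_mem_segment_apply_eq (i := 1)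
    (u := pt (1 / 2) δ) (v := q) (mem_uIcc.2 (.inl (Ioc_subset_Icc_self hy)))
  obtain ⟨θ, hθ, hθw⟩ := EuclideanSpace.exists_apply_eq_of_mem_segment hw
  have hw0 := hθw 0
  have hw1 := hθw 1
  simp only [pt_apply_zero, pt_apply_one] at hw0 hw1
  rcases le_or_gt (p 0) (w 0 + 1 / 2) with hxw | hxw
  · refine ⟨w, .inl hw, ?_⟩
    rw [E2.dist_eq_abs_of_apply_one_eq hwy.symm, abs_le, hw0]
    constructor <;> nlinarith [hx.1, hθ.1, hθ.2]
  · refine ⟨pt 1 (1 / 2 + δ), .inr (right_mem_segment ℝ _ _), ?_⟩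
    rw [← sq_le_sq₀ dist_nonneg (by norm_num), E2.dist_sq_eq]
    simp only [pt_apply_zero, pt_apply_one]
    have hx1 : (p 0 - 1) ^ 2 ≤ θ ^ 2 * (1 / 2 - q 0) ^ 2 := by
      rw [← mul_pow]
      exact sq_le_sq' (by linarith) (by nlinarith [hx.2, hθ.1])
    have hcorner' := mul_le_mul_of_nonneg_left hcorner (sq_nonneg θ)
    have hslack : 0 ≤ θ * (1 - θ) * (q 1 - δ) :=
      mul_nonneg (mul_nonneg hθ.1 (sub_nonneg.2 hθ.2)) (by linarith [hy.1, hy.2])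
    rw [← hwy, hw1]
    nlinarith

theorem exists_mem_last_segment_dist_le (hx : p 0 ∈ Icc 0 1) (hy : p 1 ∈ Ioc (q 1) 1)
    (hδ : 0 ≤ δ) (hqδ : 1 / 2 + δ ≤ q 1) (hq0 : 0 ≤ q 0) (hq : q 0 ^ 2 + (q 1 - 1) ^ 2 = 1 / 4) :
    ∃ w ∈ segment ℝ q (pt 1 (1 / 2 + δ)), dist p w ≤ 1 / 2 := by
  rcases le_or_gt (p 0) (2 * q 0) with hx2 | hx2
  · refine ⟨q, left_mem_segment ℝ _ _, ?_⟩
    rw [← sq_le_sq₀ dist_nonneg (by norm_num), E2.dist_sq_eq]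
    nlinarith [hx.1, hy.1, hy.2]
  · obtain ⟨w, hw, hwx⟩ := EuclideanSpace.exists_mem_segment_apply_eq (i := 0)
      (u := q) (v := pt 1 (1 / 2 + δ)) (mem_uIcc.2 (.inl ⟨by linarith, hx.2⟩))
    obtain ⟨θ, hθ, hθw⟩ := EuclideanSpace.exists_apply_eq_of_mem_segment hw
    refine ⟨w, hw, ?_⟩
    rw [E2.dist_eq_abs_of_apply_zero_eq hwx.symm, hθw, abs_le]
    simp only [pt_apply_one]
    constructor <;> nlinarith [hθ.1, hθ.2, hy.1, hy.2]

end OptimalPath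

theorem optimal_polygonal_path_covers_unit_square_general (δ : ℝ)
    (hδmem : δ ∈ Icc (0.167 : ℝ) 0.169)
    (q : E2) (hq : dist q (pt 0 1) = 1 / 2) (hqy : q 1 < 1)
    (hqx : q 0 ∈ Icc (0.38 : ℝ) 0.39) :
    ∀ p ∈ rect 0 1 0 1,
      ∃ x ∈ segment ℝ (pt (1 / 2) 0) (pt (1 / 2) δ) ∪
          segment ℝ (pt (1 / 2) δ) q ∪ segment ℝ q (pt 1 (1 / 2 + δ)),
        dist p x ≤ 1 / 2 := by
  obtain ⟨hδ₁, hδ₂⟩ := hδmem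
  obtain ⟨hq₁, hq₂⟩ := hqx
  have hcircle : q 0 ^ 2 + (q 1 - 1) ^ 2 = 1 / 4 := by
    have h := E2.dist_sq_eq q (pt 0 1)
    rw [hq, pt_apply_zero, pt_apply_one, sub_zero] at h
    linarith
  have hq₁_ge : (0.675 : ℝ) ≤ q 1 := by nlinarith
  rintro p ⟨hx, hy⟩
  rcases le_or_gt (p 1) δ with hyδ | hδy
  · obtain ⟨w, hw, hpw⟩ := exists_mem_first_segment_dist_le hx ⟨hy.1, hyδ⟩
    exact ⟨w, .inl (.inl hw), hpw⟩
  rcases le_or_gt (p 1) (q 1) with hyq | hqp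
  · obtain ⟨w, hw | hw, hpw⟩ :=
      exists_mem_middle_or_last_segment_dist_le hx ⟨hδy, hyq⟩ (by linarith) (by nlinarith)
    exacts [⟨w, .inl (.inr hw), hpw⟩, ⟨w, .inr hw, hpw⟩]
  · obtain ⟨w, hw, hpw⟩ := exists_mem_last_segment_dist_le (δ := δ) hx ⟨hqp, hy.2⟩
      (by linarith) (by linarith) (by linarith) hcircle
    exact ⟨w, .inr hw, hpw⟩

/-- For `δ ∈ [0.167, 0.169]` a root of `f_δ` and `q` on the circle of radius 1/2 around
`(0,1)` with `q₂ < 1`, `q₁ ∈ [0.38, 0.39]` and `f_{q^x}(q₁) = 0`, the polygonal path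
`p_s = (1/2,0) → p_δ = (1/2,δ) → q → p_t = (1, 1/2+δ)` covers the unit square
`S₀ = [0,1]²` with radius 1/2. -/
theorem optimal_polygonal_path_covers_unit_square (δ : ℝ)
    (hδmem : δ ∈ Icc (0.167 : ℝ) 0.169) (hδroot : Polynomial.aeval δ fdelta = 0)
    (q : E2) (hq : dist q (pt 0 1) = 1 / 2) (hqy : q 1 < 1)
    (hqx : q 0 ∈ Icc (0.38 : ℝ) 0.39) (hqxroot : Polynomial.aeval (q 0) fqx = 0) :
    ∀ p ∈ rect 0 1 0 1,
      ∃ x ∈ segment ℝ (pt (1 / 2) 0) (pt (1 / 2) δ) ∪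
          segment ℝ (pt (1 / 2) δ) q ∪ segment ℝ q (pt 1 (1 / 2 + δ)),
        dist p x ≤ 1 / 2 :=
  optimal_polygonal_path_covers_unit_square_general δ hδmem q hq hqy hqx
end

section
/- The minimum value L_{S₀} = min_{δ ∈ [0,1]} F(δ) satisfies 1.3088 < L_{S₀} < 1.3089 (the length of the uniquely-shaped optimal lawn mowing path between two adjacent sides of the unit square is approximately 1.308838224). -/
open Set

/-- `F δ = δ + min_{q ∈ U} (dist ((1/2, δ)) q + dist q ((1, 1/2 + δ)))`, where `U` is the
circle of radius 1/2 centered at (0,1). (The infimum is attained since `U` is compact.) -/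
noncomputable def F (δ : ℝ) : ℝ :=
  δ + sInf ((fun q : E2 => dist (pt (1 / 2) δ) q + dist q (pt 1 (1 / 2 + δ))) ''
      {q : E2 | dist q (pt 0 1) = 1 / 2})

/-!
Lower bound: pick unit vectors `u₁ ≈ (0.216, -0.976)` and `u₂ ≈ (-1.000, 0.024)`, the directions
of the two segments of the optimal path. With `P = (1/2, δ)` and `Q = (1, 1/2 + δ)` we have
`dist P q ≥ ⟪u₁, P - q⟫` and `dist q Q ≥ ⟪u₂, q - Q⟫`, and the vertical components of `u₁` and
`u₂` sum to `-1`, so the term `δ` cancels. What is left is a linear function of `q`, minimized over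
the circle `U` by Cauchy–Schwarz once more; this gives `F δ ≥ 1.308828` for every `δ`.

Upper bound: evaluate at `δ₀ = 0.1679` and at an explicit rational point `q₀` of `U`.
-/

lemma mul_add_mul_le_mul_sqrt {a b s : ℝ} (x y : ℝ) (hs : 0 ≤ s) (hab : a ^ 2 + b ^ 2 ≤ s ^ 2) :
    a * x + b * y ≤ s * √(x ^ 2 + y ^ 2) := by
  have hsq := Real.sq_sqrt (by positivity : (0 : ℝ) ≤ x ^ 2 + y ^ 2)
  have hnn := Real.sqrt_nonneg (x ^ 2 + y ^ 2)
  nlinarith [sq_nonneg (a * y - b * x), sq_nonneg (s * √(x ^ 2 + y ^ 2) - a * x - b * y),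
    sq_nonneg (s * √(x ^ 2 + y ^ 2) + a * x + b * y), mul_nonneg hs hnn]

lemma dist_pt (a b c d : ℝ) : dist (pt a b) (pt c d) = √((a - c) ^ 2 + (b - d) ^ 2) := by
  simp [pt, EuclideanSpace.dist_eq, Fin.sum_univ_two, Real.dist_eq, sq_abs]

lemma dist_pt_le {a b c d r : ℝ} (hr : 0 ≤ r) (h : (a - c) ^ 2 + (b - d) ^ 2 ≤ r ^ 2) :
    dist (pt a b) (pt c d) ≤ r := by
  rw [dist_pt]
  exact Real.sqrt_le_iff.mpr ⟨hr, h⟩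

lemma dist_pt_eq_of_sq_eq {a b c d r : ℝ} (hr : 0 ≤ r) (h : (a - c) ^ 2 + (b - d) ^ 2 = r ^ 2) :
    dist (pt a b) (pt c d) = r := by
  rw [dist_pt, h, Real.sqrt_sq hr]

lemma linear_le_mul_dist_pt {a b s : ℝ} (x y z w : ℝ) (hs : 0 ≤ s)
    (hab : a ^ 2 + b ^ 2 ≤ s ^ 2) :
    a * (x - z) + b * (y - w) ≤ s * dist (pt x y) (pt z w) := by
  rw [dist_pt]
  exact mul_add_mul_le_mul_sqrt _ _ hs hab

section F

variable {δ c : ℝ}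

lemma F_le_of_mem {q : E2} (hq : dist q (pt 0 1) = 1 / 2) :
    F δ ≤ δ + (dist (pt (1 / 2) δ) q + dist q (pt 1 (1 / 2 + δ))) := by
  have hbdd : BddBelow ((fun p : E2 => dist (pt (1 / 2) δ) p + dist p (pt 1 (1 / 2 + δ))) ''
      {p : E2 | dist p (pt 0 1) = 1 / 2}) := by
    refine ⟨0, ?_⟩
    rintro _ ⟨p, -, rfl⟩
    positivity
  exact add_le_add_right (csInf_le hbdd ⟨q, hq, rfl⟩) δ

lemma le_F_of_forall
    (h : ∀ q : E2, dist q (pt 0 1) = 1 / 2 →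
      c ≤ δ + (dist (pt (1 / 2) δ) q + dist q (pt 1 (1 / 2 + δ)))) :
    c ≤ F δ := by
  have hU : {q : E2 | dist q (pt 0 1) = 1 / 2}.Nonempty :=
    ⟨pt (1 / 2) 1, dist_pt_eq_of_sq_eq (by norm_num) (by norm_num)⟩
  have : c - δ ≤ sInf ((fun q : E2 => dist (pt (1 / 2) δ) q + dist q (pt 1 (1 / 2 + δ))) ''
      {q : E2 | dist q (pt 0 1) = 1 / 2}) := by
    refine le_csInf (hU.image _) ?_
    rintro _ ⟨q, hq, rfl⟩
    linarith [h q hq]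
  rw [F]
  linarith

end F

lemma lower_bound_le_F (δ : ℝ) : (327207 / 250000 : ℝ) ≤ F δ := by
  refine le_F_of_forall fun q hq => ?_
  obtain ⟨x, y, rfl⟩ : ∃ x y : ℝ, q = pt x y := ⟨q 0, q 1, by ext i; fin_cases i <;> rfl⟩
  have h₁ := linear_le_mul_dist_pt (a := 216046 / 1000000) (b := -976370 / 1000000)
    (1 / 2) δ x y zero_le_one (by norm_num)
  have h₂ := linear_le_mul_dist_pt (a := -999717 / 1000000) (b := 23630 / 1000000)
    x y 1 (1 / 2 + δ) zero_le_one (by norm_num)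
  have h₃ := linear_le_mul_dist_pt (a := 1215763 / 1000000) (b := -1)
    x y 0 1 (s := 787097 / 500000) (by norm_num) (by norm_num)
  rw [hq] at h₃
  linarith

lemma F_upper_witness : F (1679 / 10000) < 1.3089 := by
  have hq₀ : dist (pt (217959 / 564082) (192541 / 282041)) (pt 0 1) = 1 / 2 :=
    dist_pt_eq_of_sq_eq (by norm_num) (by norm_num)
  have h₁ : dist (pt (1 / 2) (1679 / 10000)) (pt (217959 / 564082) (192541 / 282041))
      ≤ 527159 / 1000000 := dist_pt_le (by norm_num) (by norm_num)
  have h₂ : dist (pt (217959 / 564082) (192541 / 282041)) (pt 1 (1 / 2 + 1679 / 10000))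
      ≤ 76723 / 125000 := dist_pt_le (by norm_num) (by norm_num)
  linarith [F_le_of_mem (δ := 1679 / 10000) hq₀]

/-- The minimum value `L_{S₀} = min_{δ ∈ [0,1]} F δ` (the length of the optimal lawn
mowing path between two adjacent sides of the unit square, ≈ 1.308838224) satisfies
`1.3088 < L_{S₀} < 1.3089`. -/
theorem optimal_path_length_bounds :
    1.3088 < sInf (F '' Icc 0 1) ∧ sInf (F '' Icc 0 1) < 1.3089 := by
  have hδ₀ : (1679 / 10000 : ℝ) ∈ Icc 0 1 := by norm_num
  constructor
  · calc (1.3088 : ℝ) < 327207 / 250000 := by norm_num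
      _ ≤ sInf (F '' Icc 0 1) := by
        refine le_csInf ((nonempty_of_mem hδ₀).image F) ?_
        rintro _ ⟨δ, -, rfl⟩
        exact lower_bound_le_F δ
  · calc sInf (F '' Icc 0 1) ≤ F (1679 / 10000) :=
          csInf_le ⟨_, forall_mem_image.mpr fun δ _ => lower_bound_le_F δ⟩ (mem_image_of_mem F hδ₀)
      _ < 1.3089 := F_upper_witness
end
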